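/- arXiv:2401.16639 — 5 statements merged into one kernel-verified Lean document; each statement's English description precedes it below -/
import Mathlib

section
/- If G is a (k,ℓ)-stable graph on n vertices, then α(G) ≤ ⌊(n−k+1)/2⌋ + ℓ. -/
open SimpleGraph

attribute [local instance] Classical.propDecidable

/-- The independence number of a graph: the clique number of its complement. -/
noncomputable def indepNum {V : Type*} (G : SimpleGraph V) : ℕ := Gᶜ.cliqueNum

section Aux

variable {V : Type*} [Fintype V]

/-- `s` is an independent finset of `G`. -/
def IndSet (G : SimpleGraph V) (s : Finset V) : Prop := ∀ a ∈ s, ∀ b ∈ s, ¬ G.Adj a b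

/-- The maximum size of an independent set of `G` contained in `R`. -/
noncomputable def maxInd (G : SimpleGraph V) (R : Finset V) : ℕ :=
  (R.powerset.filter (fun s => IndSet G s)).sup Finset.card

variable {G : SimpleGraph V}

lemma IndSet.mono {s t : Finset V} (h : s ⊆ t) (ht : IndSet G t) : IndSet G s :=
  fun a ha b hb => ht a (h ha) b (h hb)

lemma card_le_maxInd {s R : Finset V} (hs : s ⊆ R) (h : IndSet G s) :
    s.card ≤ maxInd G R :=
  Finset.le_sup (by simp [Finset.mem_filter, Finset.mem_powerset, hs, h])

lemma exists_maxInd (G : SimpleGraph V) (R : Finset V) :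
    ∃ s, s ⊆ R ∧ IndSet G s ∧ s.card = maxInd G R := by
  have hne : (R.powerset.filter (fun s => IndSet G s)).Nonempty :=
    ⟨∅, Finset.mem_filter.mpr ⟨Finset.empty_mem_powerset _, fun a ha => by simp at ha⟩⟩
  obtain ⟨s, hs, hcard⟩ := Finset.exists_mem_eq_sup _ hne Finset.card
  rw [Finset.mem_filter, Finset.mem_powerset] at hs
  exact ⟨s, hs.1, hs.2, hcard.symm⟩

lemma maxInd_mono {R R' : Finset V} (h : R ⊆ R') : maxInd G R ≤ maxInd G R' := by
  obtain ⟨s, hsub, hind, hcard⟩ := exists_maxInd G R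
  rw [← hcard]
  exact card_le_maxInd (hsub.trans h) hind

/-- Hammer–Hansen–Simeone type lemma: if every vertex of `R` is avoided by some
maximum independent set inside `R`, then `2·α(R) ≤ |R|`. -/
lemma hhs (G : SimpleGraph V) (R : Finset V)
    (hR : ∀ v ∈ R, ∃ s, s ⊆ R ∧ IndSet G s ∧ s.card = maxInd G R ∧ v ∉ s) :
    2 * maxInd G R ≤ R.card := by
  by_contra hlt
  push_neg at hlt
  obtain ⟨I, hIR, hIind, hIcard⟩ := exists_maxInd G R
  have hIcardR : I.card ≤ R.card := Finset.card_le_card hIR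
  set B : Finset V := R \ I with hBdef
  have hBcard : B.card = R.card - I.card := Finset.card_sdiff_of_subset hIR
  have hBlt : B.card < I.card := by omega
  set nb : Finset V → Finset V := fun X => B.filter (fun b => ∃ x ∈ X, G.Adj x b) with hnb
  set viol : Finset (Finset V) :=
    I.powerset.filter (fun X => X.Nonempty ∧ (nb X).card < X.card) with hviol
  have hIviol : I ∈ viol := by
    rw [hviol, Finset.mem_filter, Finset.mem_powerset]
    refine ⟨Finset.Subset.refl I, ?_, ?_⟩
    · rw [← Finset.card_pos]; omega
    · exact lt_of_le_of_lt (Finset.card_le_card (Finset.filter_subset _ _)) hBlt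
  obtain ⟨X, hXviol, hXmin⟩ := Finset.exists_min_image viol Finset.card ⟨I, hIviol⟩
  have hXmem := Finset.mem_filter.mp hXviol
  have hXI : X ⊆ I := Finset.mem_powerset.mp hXmem.1
  obtain ⟨hXne, hYlt⟩ := hXmem.2
  set Y : Finset V := nb X with hYdef
  obtain ⟨x, hxX⟩ := hXne
  have hXcardpos : 1 ≤ X.card := Finset.card_pos.mpr ⟨x, hxX⟩
  have hmin' : ∀ X' : Finset V, X' ⊆ I → X'.Nonempty → X'.card < X.card →
      X'.card ≤ (nb X').card := by
    intro X' hsub hne hcard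
    by_contra hc
    push_neg at hc
    have hmem : X' ∈ viol := by
      rw [hviol, Finset.mem_filter, Finset.mem_powerset]
      exact ⟨hsub, hne, hc⟩
    have := hXmin X' hmem
    omega
  -- Hall's condition for the bipartite graph between `X.erase x` and `B`.
  have hall : ∀ s : Finset {u // u ∈ X.erase x},
      s.card ≤ (s.biUnion (fun u => B.filter (fun b => G.Adj u.1 b))).card := by
    intro s
    rcases s.eq_empty_or_nonempty with rfl | hsne
    · simp
    set X' : Finset V := s.image (fun u => u.1) with hX'
    have hX'card : X'.card = s.card := Finset.card_image_of_injective _ Subtype.val_injective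
    have hX'sub : X' ⊆ X.erase x := by
      intro a ha
      rw [hX', Finset.mem_image] at ha
      obtain ⟨u, _, rfl⟩ := ha
      exact u.2
    have heq : s.biUnion (fun u => B.filter (fun b => G.Adj u.1 b)) = nb X' := by
      ext b
      simp only [Finset.mem_biUnion, hnb, Finset.mem_filter, hX', Finset.mem_image]
      constructor
      · rintro ⟨u, hu, hb, hadj⟩
        exact ⟨hb, u.1, ⟨u, hu, rfl⟩, hadj⟩
      · rintro ⟨hb, a, ⟨u, hu, rfl⟩, hadj⟩
        exact ⟨u, hu, hb, hadj⟩
    rw [heq, ← hX'card]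
    refine hmin' X' (fun a ha => hXI (Finset.erase_subset _ _ (hX'sub ha))) ?_ ?_
    · obtain ⟨u, hu⟩ := hsne
      exact ⟨u.1, by rw [hX']; exact Finset.mem_image_of_mem _ hu⟩
    · have := Finset.card_le_card hX'sub
      have := Finset.card_erase_of_mem hxX
      omega
  obtain ⟨f, hfinj, hfmem⟩ :=
    (Finset.all_card_le_biUnion_card_iff_exists_injective _).mp hall
  have hfB : ∀ u, f u ∈ B := fun u => (Finset.mem_filter.mp (hfmem u)).1
  have hfadj : ∀ u, G.Adj u.1 (f u) := fun u => (Finset.mem_filter.mp (hfmem u)).2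
  have hfY : ∀ u, f u ∈ Y := by
    intro u
    rw [hYdef, hnb]
    exact Finset.mem_filter.mpr ⟨hfB u, u.1, Finset.mem_of_mem_erase u.2, hfadj u⟩
  have hYB : Y ⊆ B := by rw [hYdef, hnb]; exact Finset.filter_subset _ _
  set F : Finset V := Finset.univ.image f with hF
  have hFY : F ⊆ Y := by
    intro y hy
    rw [hF, Finset.mem_image] at hy
    obtain ⟨u, _, rfl⟩ := hy
    exact hfY u
  have hFcard : F.card = X.card - 1 := by
    rw [hF, Finset.card_image_of_injective _ hfinj, Finset.card_univ, Fintype.card_coe,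
      Finset.card_erase_of_mem hxX]
  have hYcard : Y.card ≤ X.card - 1 := by omega
  have hFeq : F = Y := Finset.eq_of_subset_of_card_le hFY (by omega)
  have hsurj : ∀ y ∈ Y, ∃ u, f u = y := by
    intro y hy
    rw [← hFeq, hF, Finset.mem_image] at hy
    obtain ⟨u, _, h⟩ := hy
    exact ⟨u, h⟩
  -- Claim 1: an independent subset of `X ∪ Y` avoiding `x` has at most `|X| - 1` elements.
  have claim1 : ∀ L : Finset V, L ⊆ X ∪ Y → IndSet G L → x ∉ L → L.card ≤ X.card - 1 := by
    intro L hLsub hLind hxL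
    have hinj : L.card ≤ (X.erase x).card := by
      apply Finset.card_le_card_of_injOn
        (fun u => if hu : u ∈ Y then (Classical.choose (hsurj u hu)).1 else u)
      · intro a ha
        by_cases haY : a ∈ Y
        · simp only [haY, dif_pos]
          exact (Classical.choose (hsurj a haY)).2
        · simp only [haY, dif_neg, not_false_iff]
          have haX : a ∈ X := by
            rcases Finset.mem_union.mp (hLsub ha) with h | h
            · exact h
            · exact absurd h haY
          exact Finset.mem_erase.mpr ⟨fun h => hxL (h ▸ ha), haX⟩
      · intro a ha b hb hab
        have haL : a ∈ L := ha
        have hbL : b ∈ L := hb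
        by_cases haY : a ∈ Y <;> by_cases hbY : b ∈ Y
        · simp only [haY, hbY, dif_pos] at hab
          have h1 := Classical.choose_spec (hsurj a haY)
          have h2 := Classical.choose_spec (hsurj b hbY)
          rw [← h1, ← h2]
          exact congrArg f (Subtype.ext hab)
        · simp only [haY, hbY, dif_pos, dif_neg, not_false_iff] at hab
          exfalso
          have h1 := Classical.choose_spec (hsurj a haY)
          have hadj : G.Adj b a := by
            rw [← h1, ← hab]
            exact hfadj _
          exact hLind b hbL a haL hadj
        · simp only [haY, hbY, dif_pos, dif_neg, not_false_iff] at hab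
          exfalso
          have h2 := Classical.choose_spec (hsurj b hbY)
          have hadj : G.Adj a b := by
            rw [← h2, hab]
            exact hfadj _
          exact hLind a haL b hbL hadj
        · simpa [haY, hbY] using hab
    have := Finset.card_erase_of_mem hxX
    omega
  -- Claim 2: every maximum independent set meets `X ∪ Y` in at least `|X|` vertices.
  have claim2 : ∀ K : Finset V, K ⊆ R → IndSet G K → K.card = I.card →
      X.card ≤ (K ∩ (X ∪ Y)).card := by
    intro K hKR hKind hKcard
    set K' : Finset V := (K \ (X ∪ Y)) ∪ X with hK'
    have hdisj : Disjoint (K \ (X ∪ Y)) X :=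
      Finset.disjoint_left.mpr
        (fun a ha hX => (Finset.mem_sdiff.mp ha).2 (Finset.mem_union_left _ hX))
    have hK'sub : K' ⊆ R := by
      intro a ha
      rcases Finset.mem_union.mp ha with h | h
      · exact hKR (Finset.mem_sdiff.mp h).1
      · exact hIR (hXI h)
    have hK'ind : IndSet G K' := by
      intro a ha b hb hadj
      rcases Finset.mem_union.mp ha with ha' | ha' <;> rcases Finset.mem_union.mp hb with hb' | hb'
      · exact hKind a (Finset.mem_sdiff.mp ha').1 b (Finset.mem_sdiff.mp hb').1 hadj
      · -- a ∈ K \ (X ∪ Y), b ∈ X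
        obtain ⟨haK, haNXY⟩ := Finset.mem_sdiff.mp ha'
        by_cases haI : a ∈ I
        · exact hIind a haI b (hXI hb') hadj
        · have haB : a ∈ B := Finset.mem_sdiff.mpr ⟨hKR haK, haI⟩
          have haY : a ∈ Y := by
            rw [hYdef, hnb]
            exact Finset.mem_filter.mpr ⟨haB, b, hb', hadj.symm⟩
          exact haNXY (Finset.mem_union_right _ haY)
      · -- a ∈ X, b ∈ K \ (X ∪ Y)
        obtain ⟨hbK, hbNXY⟩ := Finset.mem_sdiff.mp hb'
        by_cases hbI : b ∈ I
        · exact hIind a (hXI ha') b hbI hadj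
        · have hbB : b ∈ B := Finset.mem_sdiff.mpr ⟨hKR hbK, hbI⟩
          have hbY : b ∈ Y := by
            rw [hYdef, hnb]
            exact Finset.mem_filter.mpr ⟨hbB, a, ha', hadj⟩
          exact hbNXY (Finset.mem_union_right _ hbY)
      · exact hIind a (hXI ha') b (hXI hb') hadj
    have hcardeq : K'.card = (K \ (X ∪ Y)).card + X.card := Finset.card_union_of_disjoint hdisj
    have h1 : (K \ (X ∪ Y)).card + (K ∩ (X ∪ Y)).card = K.card :=
      Finset.card_sdiff_add_card_inter _ _
    have h2 : K'.card ≤ I.card := by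
      rw [hIcard]
      exact card_le_maxInd hK'sub hK'ind
    omega
  have hxR : x ∈ R := hIR (hXI hxX)
  obtain ⟨K, hKR, hKind, hKcard, hxK⟩ := hR x hxR
  have hKcard' : K.card = I.card := by rw [hKcard, hIcard]
  have h1 := claim2 K hKR hKind hKcard'
  have h2 := claim1 (K ∩ (X ∪ Y)) Finset.inter_subset_right
      (hKind.mono Finset.inter_subset_left)
      (fun h => hxK (Finset.mem_inter.mp h).1)
  omega

/-- Main internal induction. -/
lemma mainInd (G : SimpleGraph V) :
    ∀ k ℓ : ℕ, ∀ R : Finset V, ℓ < k → k ≤ R.card →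
    (∀ S ⊆ R, S.card = k → maxInd G R ≤ maxInd G (R \ S) + ℓ) →
    maxInd G R ≤ (R.card - k + 1) / 2 + ℓ := by
  intro k
  induction k using Nat.strong_induction_on with
  | _ k IH =>
    intro ℓ R hlk hkR hstab
    by_cases hαl : maxInd G R ≤ ℓ
    · exact le_trans hαl (Nat.le_add_left _ _)
    push_neg at hαl
    by_cases hcore : ∃ v ∈ R, ∀ s, s ⊆ R → IndSet G s → s.card = maxInd G R → v ∈ s
    · obtain ⟨v, hvR, hv⟩ := hcore
      rcases Nat.eq_zero_or_pos ℓ with rfl | hℓpos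
      · -- ℓ = 0 : contradiction with stability
        exfalso
        have h1 : k - 1 ≤ (R.erase v).card := by
          rw [Finset.card_erase_of_mem hvR]; omega
        obtain ⟨T, hTsub, hTcard⟩ := Finset.exists_subset_card_eq h1
        have hvT : v ∉ T := fun h => Finset.notMem_erase v R (hTsub h)
        have hScard : (insert v T).card = k := by
          rw [Finset.card_insert_of_notMem hvT, hTcard]; omega
        have hSsub : insert v T ⊆ R :=
          Finset.insert_subset hvR (hTsub.trans (Finset.erase_subset _ _))
        have hst := hstab _ hSsub hScard
        obtain ⟨s, hsub, hind, hcard⟩ := exists_maxInd G (R \ insert v T)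
        have hsR : s ⊆ R := hsub.trans (Finset.sdiff_subset)
        have hle : s.card ≤ maxInd G R := card_le_maxInd hsR hind
        have hscard : s.card = maxInd G R := by omega
        have hvs : v ∈ s := hv s hsR hind hscard
        exact (Finset.mem_sdiff.mp (hsub hvs)).2 (Finset.mem_insert_self v T)
      · -- ℓ ≥ 1 : remove the core vertex
        set R' := R.erase v with hR'
        have hR'card : R'.card = R.card - 1 := Finset.card_erase_of_mem hvR
        have hup : maxInd G R ≤ maxInd G R' + 1 := by
          obtain ⟨s, hsub, hind, hcard⟩ := exists_maxInd G R
          have hvs : v ∈ s := hv s hsub hind hcard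
          have hsub' : s.erase v ⊆ R' := Finset.erase_subset_erase v hsub
          have h2 := card_le_maxInd hsub' (hind.mono (Finset.erase_subset _ _))
          rw [Finset.card_erase_of_mem hvs] at h2
          omega
        have hdown : maxInd G R' + 1 ≤ maxInd G R := by
          obtain ⟨s, hsub, hind, hcard⟩ := exists_maxInd G R'
          have hsR : s ⊆ R := hsub.trans (Finset.erase_subset _ _)
          have h2 : s.card ≤ maxInd G R := card_le_maxInd hsR hind
          have hne : s.card ≠ maxInd G R := by
            intro h
            exact Finset.notMem_erase v R (hsub (hv s hsR hind h))
          omega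
        have hstab' : ∀ T ⊆ R', T.card = k - 1 →
            maxInd G R' ≤ maxInd G (R' \ T) + (ℓ - 1) := by
          intro T hTsub hTcard
          have hvT : v ∉ T := fun h => Finset.notMem_erase v R (hTsub h)
          have hSsub : insert v T ⊆ R :=
            Finset.insert_subset hvR (hTsub.trans (Finset.erase_subset _ _))
          have hScard : (insert v T).card = k := by
            rw [Finset.card_insert_of_notMem hvT, hTcard]; omega
          have hst := hstab _ hSsub hScard
          have hRS : R \ insert v T = R' \ T := by
            rw [hR']
            ext a
            simp only [Finset.mem_sdiff, Finset.mem_erase, Finset.mem_insert]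
            tauto
          rw [hRS] at hst
          omega
        have hIH := IH (k - 1) (by omega) (ℓ - 1) R' (by omega) (by omega) hstab'
        omega
    · push_neg at hcore
      by_cases hk1 : k = ℓ + 1
      · have h2 := hhs G R hcore
        subst hk1
        omega
      · have hRne : R.Nonempty := Finset.card_pos.mp (by omega)
        obtain ⟨v, hvR⟩ := hRne
        obtain ⟨s, hsub, hind, hcard, hvs⟩ := hcore v hvR
        set R' := R.erase v with hR'
        have hR'card : R'.card = R.card - 1 := Finset.card_erase_of_mem hvR
        have heq : maxInd G R' = maxInd G R := by
          apply le_antisymm (maxInd_mono (Finset.erase_subset _ _))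
          rw [← hcard]
          exact card_le_maxInd (Finset.subset_erase.mpr ⟨hsub, hvs⟩) hind
        have hstab' : ∀ T ⊆ R', T.card = k - 1 →
            maxInd G R' ≤ maxInd G (R' \ T) + ℓ := by
          intro T hTsub hTcard
          have hvT : v ∉ T := fun h => Finset.notMem_erase v R (hTsub h)
          have hSsub : insert v T ⊆ R :=
            Finset.insert_subset hvR (hTsub.trans (Finset.erase_subset _ _))
          have hScard : (insert v T).card = k := by
            rw [Finset.card_insert_of_notMem hvT, hTcard]; omega
          have hst := hstab _ hSsub hScard
          have hRS : R \ insert v T = R' \ T := by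
            rw [hR']
            ext a
            simp only [Finset.mem_sdiff, Finset.mem_erase, Finset.mem_insert]
            tauto
          rw [hRS] at hst
          omega
        have hIH := IH (k - 1) (by omega) ℓ R' (by omega) (by omega) hstab'
        omega

lemma indepNum_eq_maxInd_univ (G : SimpleGraph V) : _root_.indepNum G = maxInd G Finset.univ := by
  apply le_antisymm
  · obtain ⟨s, hs⟩ := Gᶜ.exists_isNClique_cliqueNum
    rw [_root_.indepNum, ← hs.2]
    apply card_le_maxInd (Finset.subset_univ s)
    intro a ha b hb hadj
    rcases eq_or_ne a b with rfl | hne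
    · exact G.irrefl hadj
    · have h2 := hs.1 (Finset.mem_coe.mpr ha) (Finset.mem_coe.mpr hb) hne
      rw [SimpleGraph.compl_adj] at h2
      exact h2.2 hadj
  · obtain ⟨t, htsub, htind, htcard⟩ := exists_maxInd G Finset.univ
    rw [_root_.indepNum, ← htcard]
    have hclique : Gᶜ.IsClique ↑t := by
      intro a ha b hb hne
      rw [SimpleGraph.compl_adj]
      exact ⟨hne, htind a (Finset.mem_coe.mp ha) b (Finset.mem_coe.mp hb)⟩
    exact SimpleGraph.IsClique.card_le_cliqueNum (tc := hclique)

lemma indepNum_induce_compl (G : SimpleGraph V) (S : Finset V) :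
    _root_.indepNum (G.induce ((S : Set V)ᶜ)) = maxInd G (Finset.univ \ S) := by
  haveI : Fintype (((S : Set V)ᶜ : Set V)) := Fintype.ofFinite _
  apply le_antisymm
  · obtain ⟨s, hs⟩ := (G.induce ((S : Set V)ᶜ))ᶜ.exists_isNClique_cliqueNum
    rw [_root_.indepNum, ← hs.2,
      ← Finset.card_map ⟨Subtype.val, Subtype.val_injective⟩]
    apply card_le_maxInd
    · intro a ha
      rw [Finset.mem_map] at ha
      obtain ⟨u, hu, rfl⟩ := ha
      have h2 := u.2
      simp only [Set.mem_compl_iff, Finset.mem_coe] at h2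
      simp only [Finset.mem_sdiff, Finset.mem_univ, true_and]
      exact h2
    · intro a ha b hb hadj
      rw [Finset.mem_map] at ha hb
      obtain ⟨u, hu, rfl⟩ := ha
      obtain ⟨w, hw, rfl⟩ := hb
      rcases eq_or_ne u w with rfl | hne
      · exact G.irrefl hadj
      · have h2 := hs.1 (Finset.mem_coe.mpr hu) (Finset.mem_coe.mpr hw) hne
        rw [SimpleGraph.compl_adj] at h2
        exact h2.2 hadj
  · obtain ⟨t, htsub, htind, htcard⟩ := exists_maxInd G (Finset.univ \ S)
    have htS : ∀ a ∈ t, a ∈ ((S : Set V)ᶜ : Set V) := by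
      intro a ha
      have h2 := (Finset.mem_sdiff.mp (htsub ha)).2
      simpa [Set.mem_compl_iff, Finset.mem_coe] using h2
    set s : Finset (((S : Set V)ᶜ : Set V)) :=
      t.attach.map ⟨fun a => ⟨a.1, htS a.1 a.2⟩,
        fun a b h => Subtype.ext (Subtype.mk_eq_mk.mp h)⟩ with hsdef
    have hmem : ∀ a : (((S : Set V)ᶜ : Set V)), a ∈ s → a.1 ∈ t := by
      intro a ha
      rw [hsdef, Finset.mem_map] at ha
      obtain ⟨u, _, rfl⟩ := ha
      exact u.2
    have hscard : s.card = t.card := by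
      rw [hsdef, Finset.card_map, Finset.card_attach]
    have hsclique : ((G.induce ((S : Set V)ᶜ))ᶜ).IsClique ↑s := by
      intro a ha b hb hne
      rw [SimpleGraph.compl_adj]
      refine ⟨hne, ?_⟩
      intro h
      exact htind a.1 (hmem a (Finset.mem_coe.mp ha)) b.1 (hmem b (Finset.mem_coe.mp hb)) h
    rw [_root_.indepNum, ← htcard, ← hscard]
    exact SimpleGraph.IsClique.card_le_cliqueNum (tc := hsclique)

end Aux

/-- If `G` is `(k,ℓ)`-stable on `n` vertices then `α(G) ≤ ⌊(n-k+1)/2⌋ + ℓ`. -/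
theorem stmt0 {V : Type*} [Fintype V] (G : SimpleGraph V) (k ℓ : ℕ)
    (hkl : ℓ < k) (hk : k ≤ Fintype.card V)
    (hstable : ∀ S : Finset V, S.card = k →
      _root_.indepNum G ≤ _root_.indepNum (G.induce ((S : Set V)ᶜ)) + ℓ) :
    _root_.indepNum G ≤ (Fintype.card V - k + 1) / 2 + ℓ := by
  have hstab' : ∀ S ⊆ (Finset.univ : Finset V), S.card = k →
      maxInd G Finset.univ ≤ maxInd G (Finset.univ \ S) + ℓ := by
    intro S _ hS
    have h := hstable S hS
    rwa [indepNum_eq_maxInd_univ, indepNum_induce_compl] at h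
  have h := mainInd G k ℓ Finset.univ hkl (by simpa using hk) hstab'
  rw [indepNum_eq_maxInd_univ]
  simpa [Finset.card_univ] using h
end

section
/- Let G be a (1,0)-stable graph and A a maximum independent set in G. Then there exists a matching in G of size |A| between A and V(G) \ A (i.e., a matching saturating A). -/
open SimpleGraph

lemma exists_avoid {V : Type*} [Fintype V] (G : SimpleGraph V)
    (hstable : ∀ v : V, _root_.indepNum (G.induce ({v}ᶜ : Set V)) = _root_.indepNum G) (v : V) :
    ∃ B : Finset V, Gᶜ.IsClique (B : Set V) ∧ B.card = _root_.indepNum G ∧ v ∉ B := by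
  classical
  haveI : Fintype ({v}ᶜ : Set V) := Fintype.ofFinite _
  obtain ⟨s, hs⟩ := ((G.induce ({v}ᶜ : Set V))ᶜ).exists_isNClique_cliqueNum
  refine ⟨s.image Subtype.val, ?_, ?_, ?_⟩
  · intro a ha b hb hab
    simp only [Finset.coe_image, Set.mem_image] at ha hb
    obtain ⟨x, hx, rfl⟩ := ha
    obtain ⟨y, hy, rfl⟩ := hb
    have hxy : x ≠ y := fun h => hab (by rw [h])
    have := hs.isClique hx hy hxy
    rw [compl_adj] at this ⊢
    simp only [comap_adj, Function.Embedding.coe_subtype] at this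
    exact ⟨hab, this.2⟩
  · rw [Finset.card_image_of_injective _ Subtype.val_injective, hs.card_eq]
    exact hstable v
  · intro hv
    simp only [Finset.mem_image] at hv
    obtain ⟨x, _, hx⟩ := hv
    exact x.2 hx

/-- In a `(1,0)`-stable graph, any maximum independent set `A` is saturated by a matching
into `V \ A`. -/
theorem stmt1 {V : Type*} [Fintype V] (G : SimpleGraph V)
    (hstable : ∀ v : V, _root_.indepNum (G.induce ({v}ᶜ : Set V)) = _root_.indepNum G)
    (A : Finset V) (hAind : Gᶜ.IsClique (A : Set V)) (hAmax : A.card = _root_.indepNum G) :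
    ∃ f : A → V, Function.Injective f ∧ ∀ a : A, f a ∉ A ∧ G.Adj (a : V) (f a) := by
  classical
  set t : A → Finset V := fun a => Finset.univ.filter (fun w => w ∉ A ∧ G.Adj (a : V) w) with ht
  have hmem : ∀ (a : A) (w : V), w ∈ t a ↔ w ∉ A ∧ G.Adj (a : V) w := by
    intro a w; simp [ht]
  have hall : ∀ s : Finset A, s.card ≤ (s.biUnion t).card := by
    intro s
    induction s using Finset.strongInduction with
    | _ s IH =>
    by_contra hcon
    push_neg at hcon
    -- s is nonempty
    have hspos : 0 < s.card := lt_of_le_of_lt (Nat.zero_le _) hcon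
    obtain ⟨v, hv⟩ := Finset.card_pos.mp hspos
    set s' := s.erase v with hs'
    have hs'sub : s' ⊆ s := Finset.erase_subset _ _
    have hs'ssub : s' ⊂ s := Finset.erase_ssubset hv
    have hs'card : s'.card = s.card - 1 := Finset.card_erase_of_mem hv
    set N := s.biUnion t with hN
    -- matching from s' into its neighborhoods, via Hall on subsets of s'
    have hallsmall : ∀ u : Finset s', u.card ≤ (u.biUnion (fun x => t x.1)).card := by
      intro u
      have himg : (u.image Subtype.val).biUnion t = u.biUnion (fun x => t x.1) := by
        ext w; simp
      have hsub : u.image Subtype.val ⊆ s' := by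
        intro x hx; simp only [Finset.mem_image] at hx
        obtain ⟨y, _, rfl⟩ := hx; exact y.2
      have := IH (u.image Subtype.val) (lt_of_le_of_lt hsub hs'ssub)
      rwa [Finset.card_image_of_injective _ Subtype.val_injective, himg] at this
    obtain ⟨g, hginj, hgmem⟩ :=
      (Finset.all_card_le_biUnion_card_iff_exists_injective (fun x : s' => t x.1)).mp hallsmall
    set I : Finset V := Finset.univ.image g with hI
    have hIcard : I.card = s'.card := by
      rw [hI, Finset.card_image_of_injective _ hginj, Finset.card_univ, Fintype.card_coe]
    have hIN : I ⊆ N := by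
      intro w hw
      simp only [hI, Finset.mem_image, Finset.mem_univ, true_and] at hw
      obtain ⟨x, rfl⟩ := hw
      exact Finset.mem_biUnion.mpr ⟨x.1, hs'sub x.2, hgmem x⟩
    have hNI : N = I := by
      refine (Finset.eq_of_subset_of_card_le hIN ?_).symm
      rw [hIcard, hs'card]; omega
    -- maximum independent set avoiding v
    obtain ⟨B, hBind, hBcard, hvB⟩ := exists_avoid G hstable (v : V)
    set Sv : Finset V := s.image Subtype.val with hSv
    -- C = (B \ N) ∪ Sv is independent
    set C : Finset V := (B \ N) ∪ Sv with hC
    have hCind : Gᶜ.IsClique (C : Set V) := by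
      intro x hx y hy hxy
      rw [compl_adj]
      refine ⟨hxy, ?_⟩
      simp only [hC, Finset.coe_union, Set.mem_union, Finset.coe_sdiff, Set.mem_diff,
        Finset.mem_coe] at hx hy
      have key : ∀ p q : V, p ∈ B ∧ p ∉ N → q ∈ Sv → ¬G.Adj p q := by
        intro p q hp hq hadj
        simp only [hSv, Finset.mem_image] at hq
        obtain ⟨a, has, rfl⟩ := hq
        by_cases hpA : p ∈ A
        · exact (hAind (Finset.mem_coe.mpr hpA) (Finset.mem_coe.mpr a.2) (G.ne_of_adj hadj)).2 hadj
        · exact hp.2 (Finset.mem_biUnion.mpr ⟨a, has, (hmem a p).mpr ⟨hpA, hadj.symm⟩⟩)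
      rcases hx with hx | hx <;> rcases hy with hy | hy
      · exact ((hBind hx.1 hy.1 hxy).2 : ¬G.Adj x y)
      · exact key x y hx hy
      · exact fun hadj => key y x hy hx hadj.symm
      · have := hAind (Finset.mem_coe.mpr ?_) (Finset.mem_coe.mpr ?_) hxy
        · exact this.2
        · simp only [hSv, Finset.mem_image] at hx; obtain ⟨a, _, rfl⟩ := hx; exact a.2
        · simp only [hSv, Finset.mem_image] at hy; obtain ⟨a, _, rfl⟩ := hy; exact a.2
    -- injection from B ∩ N into (Sv \ B).erase v
    have hvSv : (v : V) ∈ Sv \ B := by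
      rw [Finset.mem_sdiff]
      exact ⟨Finset.mem_image.mpr ⟨v, hv, rfl⟩, hvB⟩
    have hinj : (B ∩ N).card ≤ ((Sv \ B).erase (v : V)).card := by
      set F : V → V := fun n =>
        if h : ∃ x : s', g x = n then ((Classical.choose h : s').1 : A).1 else n with hF
      apply Finset.card_le_card_of_injOn F
      · intro n hn
        have hnN : n ∈ N := (Finset.mem_inter.mp hn).2
        have hnB : n ∈ B := (Finset.mem_inter.mp hn).1
        have hex : ∃ x : s', g x = n := by
          have : n ∈ I := hNI ▸ hnN
          simp only [hI, Finset.mem_image, Finset.mem_univ, true_and] at this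
          exact this
        set x := Classical.choose hex with hx
        have hgx : g x = n := Classical.choose_spec hex
        have hFn : F n = ((x : s').1 : A).1 := by rw [hF]; simp only [dif_pos hex]; rfl
        have hadj : G.Adj (((x : s').1 : A) : V) n := by
          have := (hmem (x : s').1 (g x)).mp (hgmem x)
          rw [hgx] at this; exact this.2
        rw [hFn]
        rw [Finset.mem_coe, Finset.mem_erase, Finset.mem_sdiff]
        refine ⟨?_, ?_, ?_⟩
        · -- x.1 ≠ v as elements of A hence vals differ
          have hxv : (x : s').1 ≠ v := (Finset.mem_erase.mp (x : s').2).1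
          exact fun h => hxv (Subtype.val_injective h)
        · exact Finset.mem_image.mpr ⟨(x : s').1, Finset.mem_of_mem_erase (x : s').2, rfl⟩
        · intro hmemB
          exact (hBind (Finset.mem_coe.mpr hmemB) (Finset.mem_coe.mpr hnB)
            (G.ne_of_adj hadj)).2 hadj
      · intro n1 hn1 n2 hn2 hFeq
        have hex1 : ∃ x : s', g x = n1 := by
          have : n1 ∈ I := hNI ▸ (Finset.mem_inter.mp (Finset.mem_coe.mp hn1)).2
          simpa only [hI, Finset.mem_image, Finset.mem_univ, true_and] using this
        have hex2 : ∃ x : s', g x = n2 := by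
          have : n2 ∈ I := hNI ▸ (Finset.mem_inter.mp (Finset.mem_coe.mp hn2)).2
          simpa only [hI, Finset.mem_image, Finset.mem_univ, true_and] using this
        rw [hF] at hFeq
        simp only [dif_pos hex1, dif_pos hex2] at hFeq
        have heq : Classical.choose hex1 = Classical.choose hex2 :=
          Subtype.val_injective (Subtype.val_injective hFeq)
        rw [← Classical.choose_spec hex1, ← Classical.choose_spec hex2, heq]
    -- counting
    have h1 : (B \ N).card + (B ∩ N).card = B.card := Finset.card_sdiff_add_card_inter B N
    have h2 : ((Sv \ B).erase (v : V)).card = (Sv \ B).card - 1 :=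
      Finset.card_erase_of_mem hvSv
    have h3 : 1 ≤ (Sv \ B).card := Finset.card_pos.mpr ⟨_, hvSv⟩
    have h4 : (B \ N).card + (Sv \ B).card ≤ C.card := by
      have hdisj : Disjoint (B \ N) (Sv \ B) := by
        rw [Finset.disjoint_left]
        intro x hx hy
        exact (Finset.mem_sdiff.mp hy).2 (Finset.mem_sdiff.mp hx).1
      rw [← Finset.card_union_of_disjoint hdisj]
      apply Finset.card_le_card
      intro x hx
      rcases Finset.mem_union.mp hx with h | h
      · exact Finset.mem_union.mpr (Or.inl h)
      · exact Finset.mem_union.mpr (Or.inr (Finset.mem_sdiff.mp h).1)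
    have h5 : C.card ≤ _root_.indepNum G :=
      SimpleGraph.IsClique.card_le_cliqueNum (tc := hCind)
    omega
  obtain ⟨f, hfinj, hfm⟩ := (Finset.all_card_le_biUnion_card_iff_exists_injective t).mp hall
  refine ⟨f, hfinj, fun a => ?_⟩
  exact (hmem a (f a)).mp (hfm a)
end

section
/- If G is a (1,0)-stable graph on an even number n of vertices with α(G) = n/2, then G contains a perfect matching. -/
open SimpleGraph

/-- A tight `(1,0)`-stable graph on an even number of vertices has a perfect matching. -/
theorem stmt3 {V : Type*} [Fintype V] (G : SimpleGraph V)
    (hstable : ∀ v : V, _root_.indepNum (G.induce ({v}ᶜ : Set V)) = _root_.indepNum G)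
    (heven : Even (Fintype.card V)) (halpha : _root_.indepNum G = Fintype.card V / 2) :
    ∃ M : G.Subgraph, M.IsPerfectMatching := by
  classical
  set n := Fintype.card V with hn
  set k := n / 2 with hk
  have hnk : n = k + k := by obtain ⟨r, hr⟩ := heven; omega
  -- `Ind I` : `I` is an independent set of `G`.
  let Ind : Finset V → Prop := fun I => ∀ a ∈ I, ∀ b ∈ I, ¬ G.Adj a b
  -- Every independent set has at most `k` elements.
  have hbound : ∀ I : Finset V, Ind I → I.card ≤ k := by
    intro I hI
    have hclique : Gᶜ.IsClique (I : Set V) := by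
      intro a ha b hb hab
      exact ⟨hab, hI a ha b hb⟩
    calc I.card ≤ Gᶜ.cliqueNum := hclique.card_le_cliqueNum
      _ = k := halpha
  -- For every vertex there is a maximum independent set avoiding it.
  have havoid : ∀ v : V, ∃ I : Finset V, Ind I ∧ I.card = k ∧ v ∉ I := by
    intro v
    obtain ⟨s, hs⟩ := (G.induce ({v}ᶜ : Set V))ᶜ.exists_isNClique_cliqueNum
    refine ⟨s.map ⟨Subtype.val, Subtype.val_injective⟩, ?_, ?_, ?_⟩
    · intro a ha b hb hadj
      simp only [Finset.mem_map, Function.Embedding.coeFn_mk] at ha hb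
      obtain ⟨x, hx, rfl⟩ := ha
      obtain ⟨y, hy, rfl⟩ := hb
      have hxy : x ≠ y := by rintro rfl; exact G.irrefl hadj
      have h2 := hs.isClique hx hy hxy
      rw [compl_adj] at h2
      exact h2.2 hadj
    · rw [Finset.card_map, hs.card_eq]
      have h3 := hstable v
      rw [halpha] at h3
      exact h3
    · intro hv
      simp only [Finset.mem_map, Function.Embedding.coeFn_mk] at hv
      obtain ⟨x, hx, hxv⟩ := hv
      exact x.2 (by simp [hxv])
  -- A maximum independent set `S`.
  obtain ⟨S, hSnc⟩ := Gᶜ.exists_isNClique_cliqueNum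
  have hS : Ind S := by
    intro a ha b hb hadj
    by_cases hab : a = b
    · subst hab; exact G.irrefl hadj
    · exact ((compl_adj G a b).mp (hSnc.isClique ha hb hab)).2 hadj
  have hScard : S.card = k := by rw [hSnc.card_eq]; exact halpha
  -- Neighborhood of a finset
  let nbr : Finset V → Finset V := fun A => Finset.univ.filter fun b => ∃ a ∈ A, G.Adj a b
  have hnbr_mem : ∀ {A : Finset V} {b : V}, b ∈ nbr A ↔ ∃ a ∈ A, G.Adj a b := by
    intro A b; simp [nbr]
  -- Hall's condition between S and its complement.
  have hall : ∀ A ⊆ S, A.card ≤ (nbr A).card := by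
    by_contra hcon
    push_neg at hcon
    obtain ⟨A0, hA0S, hA0⟩ := hcon
    have hmemim : ∀ {B : Finset V}, B ⊆ S →
        B.card - (nbr B).card ∈ S.powerset.image (fun A => A.card - (nbr A).card) :=
      fun {B} hB => Finset.mem_image_of_mem _ (Finset.mem_powerset.mpr hB)
    have hne : (S.powerset.image (fun A => A.card - (nbr A).card)).Nonempty :=
      ⟨_, hmemim hA0S⟩
    set d := (S.powerset.image (fun A => A.card - (nbr A).card)).max' hne with hd
    have hd1 : 1 ≤ d := le_trans (by omega) (Finset.le_max' _ _ (hmemim hA0S))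
    have h𝒜ne : (S.powerset.filter fun A => d ≤ A.card - (nbr A).card).Nonempty := by
      obtain ⟨A, hA, hAd⟩ := Finset.mem_image.mp
        ((S.powerset.image (fun A => A.card - (nbr A).card)).max'_mem hne)
      exact ⟨A, Finset.mem_filter.mpr ⟨hA, hAd.ge⟩⟩
    obtain ⟨A, hA𝒜, hAmin⟩ := Finset.exists_min_image _ Finset.card h𝒜ne
    rw [Finset.mem_filter, Finset.mem_powerset] at hA𝒜
    obtain ⟨hAS, hAd⟩ := hA𝒜
    have hAd' : A.card - (nbr A).card ≤ d := Finset.le_max' _ _ (hmemim hAS)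
    have hAcard : A.card = (nbr A).card + d := by omega
    have hAne : A.Nonempty := Finset.card_pos.mp (by omega)
    obtain ⟨a, haA⟩ := hAne
    obtain ⟨I, hI, hIcard, haI⟩ := havoid a
    -- key inequality : `I` meets `A ∪ nbr A` in at least `A.card` vertices
    have hIkey : A.card ≤ (I ∩ (A ∪ nbr A)).card := by
      have hI'ind : Ind ((I \ (A ∪ nbr A)) ∪ A) := by
        intro x hx y hy hadj
        rw [Finset.mem_union, Finset.mem_sdiff] at hx hy
        rcases hx with ⟨hxI, hxn⟩ | hxA
        · rcases hy with ⟨hyI, hyn⟩ | hyA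
          · exact hI x hxI y hyI hadj
          · exact hxn (Finset.mem_union_right _ (hnbr_mem.mpr ⟨y, hyA, hadj.symm⟩))
        · rcases hy with ⟨hyI, hyn⟩ | hyA
          · exact hyn (Finset.mem_union_right _ (hnbr_mem.mpr ⟨x, hxA, hadj⟩))
          · exact hS x (hAS hxA) y (hAS hyA) hadj
      have hdisj : Disjoint (I \ (A ∪ nbr A)) A :=
        Finset.disjoint_left.mpr fun x hx hxA =>
          (Finset.mem_sdiff.mp hx).2 (Finset.mem_union_left _ hxA)
      have hcard := hbound _ hI'ind
      rw [Finset.card_union_of_disjoint hdisj] at hcard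
      have hsplit : (I \ (A ∪ nbr A)).card + (I ∩ (A ∪ nbr A)).card = I.card :=
        Finset.card_sdiff_add_card_inter _ _
      omega
    have hAnbr : Disjoint A (nbr A) := Finset.disjoint_left.mpr (by
      intro x hxA hxN
      obtain ⟨a', ha', hadj⟩ := hnbr_mem.mp hxN
      exact hS a' (hAS ha') x (hAS hxA) hadj)
    have hsplit2 : (I ∩ (A ∪ nbr A)).card = (I ∩ A).card + (I ∩ nbr A).card := by
      rw [Finset.inter_union_distrib_left]
      exact Finset.card_union_of_disjoint
        (hAnbr.mono Finset.inter_subset_right Finset.inter_subset_right)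
    have hB1sub : I ∩ nbr A ⊆ nbr A := Finset.inter_subset_right
    have hNA1 : nbr (I ∩ A) ⊆ nbr A \ (I ∩ nbr A) := by
      intro x hx
      obtain ⟨a', ha', hadj⟩ := hnbr_mem.mp hx
      rw [Finset.mem_inter] at ha'
      refine Finset.mem_sdiff.mpr ⟨hnbr_mem.mpr ⟨a', ha'.2, hadj⟩, ?_⟩
      intro hxI
      exact hI a' ha'.1 x (Finset.mem_inter.mp hxI).1 hadj
    have hNA1card : (nbr (I ∩ A)).card + (I ∩ nbr A).card ≤ (nbr A).card := by
      have h1 := Finset.card_le_card hNA1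
      have h2 : (nbr A \ (I ∩ nbr A)).card = (nbr A).card - (I ∩ nbr A).card :=
        Finset.card_sdiff_of_subset hB1sub
      have h3 : (I ∩ nbr A).card ≤ (nbr A).card := Finset.card_le_card hB1sub
      omega
    have hA1d : d ≤ (I ∩ A).card - (nbr (I ∩ A)).card := by omega
    have hA1S : I ∩ A ⊆ S := Finset.inter_subset_right.trans hAS
    have hmin := hAmin (I ∩ A)
      (Finset.mem_filter.mpr ⟨Finset.mem_powerset.mpr hA1S, hA1d⟩)
    have hss : I ∩ A ⊂ A := (Finset.ssubset_iff_of_subset Finset.inter_subset_right).mpr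
      ⟨a, haA, fun h => haI (Finset.mem_inter.mp h).1⟩
    exact absurd hmin (not_le.mpr (Finset.card_lt_card hss))
  -- Hall's marriage theorem gives an injection from S to neighbors.
  have hallcond : ∀ Z : Finset {x // x ∈ S},
      Z.card ≤ (Z.biUnion fun x => Finset.univ.filter fun b => G.Adj ↑x b).card := by
    intro Z
    have himg : (Z.biUnion fun x => Finset.univ.filter fun b => G.Adj ↑x b)
        = nbr (Z.image Subtype.val) := by
      ext b
      simp only [Finset.mem_biUnion, Finset.mem_filter, Finset.mem_univ, true_and,
        hnbr_mem, Finset.mem_image]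
      constructor
      · rintro ⟨x, hx, hadj⟩; exact ⟨↑x, ⟨x, hx, rfl⟩, hadj⟩
      · rintro ⟨a, ⟨x, hx, rfl⟩, hadj⟩; exact ⟨x, hx, hadj⟩
    rw [himg]
    have hcardZ : (Z.image Subtype.val).card = Z.card :=
      Finset.card_image_of_injective _ Subtype.val_injective
    have hsub : Z.image Subtype.val ⊆ S := by
      intro x hx
      obtain ⟨y, _, rfl⟩ := Finset.mem_image.mp hx
      exact y.2
    calc Z.card = (Z.image Subtype.val).card := hcardZ.symm
      _ ≤ (nbr (Z.image Subtype.val)).card := hall _ hsub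
  obtain ⟨f, hfinj, hfadj⟩ :=
    (Finset.all_card_le_biUnion_card_iff_exists_injective
      (fun x : {x // x ∈ S} => Finset.univ.filter fun b => G.Adj ↑x b)).mp hallcond
  have hfadj' : ∀ x : {x // x ∈ S}, G.Adj ↑x (f x) := by
    intro x
    have := hfadj x
    simp only [Finset.mem_filter, Finset.mem_univ, true_and] at this
    exact this
  have hfS : ∀ x : {x // x ∈ S}, f x ∉ S := fun x hfx => hS _ x.2 _ hfx (hfadj' x)
  -- Build the matching.
  let SS : Set V := ↑S
  have hcardSS : Fintype.card SS = k := by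
    rw [Fintype.card_congr (Equiv.subtypeEquivRight (fun x => Finset.mem_coe)),
      Fintype.card_coe, hScard]
  have hcardSSc : Fintype.card ↥SSᶜ = k := by
    rw [Fintype.card_compl_set, hcardSS]; omega
  let g : SS → ↥SSᶜ := fun x => ⟨f ⟨↑x, Finset.mem_coe.mp x.2⟩, by
    simpa [SS] using hfS ⟨↑x, Finset.mem_coe.mp x.2⟩⟩
  have hginj : Function.Injective g := by
    intro x y hxy
    have h1 : f ⟨↑x, Finset.mem_coe.mp x.2⟩ = f ⟨↑y, Finset.mem_coe.mp y.2⟩ :=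
      congrArg Subtype.val hxy
    have h2 := hfinj h1
    exact Subtype.ext (congrArg Subtype.val h2)
  have hgbij : Function.Bijective g :=
    (Fintype.bijective_iff_injective_and_card g).mpr ⟨hginj, by rw [hcardSS, hcardSSc]⟩
  obtain ⟨M, hMv, hMm⟩ := SimpleGraph.Subgraph.IsMatching.exists_of_disjoint_sets_of_equiv
    (disjoint_compl_right : Disjoint SS SSᶜ) (Equiv.ofBijective g hgbij)
    (fun v => hfadj' ⟨↑v, Finset.mem_coe.mp v.2⟩)
  refine ⟨M, hMm, ?_⟩
  intro v
  rw [hMv, Set.union_compl_self]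
  trivial
end

section
/- If G is a tight (k,0)-stable graph and v is any vertex of G, then G − v is a tight (k−1,0)-stable graph, for k ≥ 1. -/
open SimpleGraph

lemma indepNum_le_of_emb {α β : Type*} [Fintype β] {G : SimpleGraph α} {H : SimpleGraph β}
    (f : G ↪g H) : _root_.indepNum G ≤ _root_.indepNum H := by
  refine csSup_le ⟨0, ⟨∅, by simp⟩⟩ ?_
  rintro n ⟨s, hs⟩
  have hmap : (Gᶜ.map f.toEmbedding).IsNClique n (s.map f.toEmbedding) := hs.map
  have hle : Gᶜ.map f.toEmbedding ≤ Hᶜ := by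
    intro x y hxy
    rw [SimpleGraph.map_adj] at hxy
    obtain ⟨a, b, ⟨hne, hnadj⟩, rfl, rfl⟩ := hxy
    exact ⟨f.toEmbedding.injective.ne hne, fun h => hnadj (f.map_adj_iff.mp h)⟩
  have hH : Hᶜ.IsNClique n (s.map f.toEmbedding) :=
    ⟨hmap.isClique.mono hle, hmap.card_eq⟩
  exact hH.card_eq ▸ hH.isClique.card_le_cliqueNum

def embOfSubset {V : Type*} (G : SimpleGraph V) {A B : Set V} (h : A ⊆ B) :
    G.induce A ↪g G.induce B :=
  ⟨⟨fun x => ⟨x.1, h x.2⟩, by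
    intro a b hab
    have h2 := congrArg Subtype.val hab
    exact Subtype.ext h2⟩, Iff.rfl⟩

def embIntoAmbient {V : Type*} (G : SimpleGraph V) (A : Set V) : G.induce A ↪g G :=
  ⟨Function.Embedding.subtype _, Iff.rfl⟩

/-- If `G` is tight `(k,0)`-stable and `v` is any vertex, then `G − v` is tight
`(k−1,0)`-stable, for `k ≥ 1`. -/
theorem stmt10 {V : Type*} [Fintype V] [DecidableEq V] (G : SimpleGraph V) (k : ℕ) (hk : 1 ≤ k)
    (hstable : ∀ S : Finset V, S.card = k →
      _root_.indepNum G ≤ _root_.indepNum (G.induce ((S : Set V)ᶜ)))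
    (halpha : _root_.indepNum G = (Fintype.card V - k + 1) / 2) (v : V) :
    (∀ S : Finset ({v}ᶜ : Set V), S.card = k - 1 →
      _root_.indepNum (G.induce ({v}ᶜ : Set V)) ≤
        _root_.indepNum ((G.induce ({v}ᶜ : Set V)).induce ((S : Set ({v}ᶜ : Set V))ᶜ))) ∧
    _root_.indepNum (G.induce ({v}ᶜ : Set V)) = (Fintype.card V - 1 - (k - 1) + 1) / 2 := by
  classical
  -- α(G) ≥ 1
  have hone : 1 ≤ _root_.indepNum G := by
    have hcl : Gᶜ.IsClique ({v} : Finset V) := by simp [SimpleGraph.IsClique]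
    have := hcl.card_le_cliqueNum
    exact (by simpa using this : 1 ≤ Gᶜ.cliqueNum)
  -- card V ≥ k + 1
  have hn : k + 1 ≤ Fintype.card V := by
    rw [halpha] at hone
    omega
  -- α(G - v) ≤ α(G)
  have hle1 : _root_.indepNum (G.induce ({v}ᶜ : Set V)) ≤ _root_.indepNum G :=
    indepNum_le_of_emb (embIntoAmbient G _)
  -- α(G) ≤ α(G - v) via some k-set containing v
  have hge1 : _root_.indepNum G ≤ _root_.indepNum (G.induce ({v}ᶜ : Set V)) := by
    obtain ⟨T, hsub, -, hcard⟩ := Finset.exists_subsuperset_card_eq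
      (Finset.subset_univ ({v} : Finset V)) (by simpa using hk)
      (by simpa [Finset.card_univ] using (Nat.le_of_succ_le hn))
    have hvT : v ∈ T := hsub (Finset.mem_singleton_self v)
    have hTsub : ((T : Set V)ᶜ : Set V) ⊆ ({v}ᶜ : Set V) := by
      intro x hx hxv
      exact hx (by simpa using hxv ▸ hvT)
    exact (hstable T hcard).trans (indepNum_le_of_emb (embOfSubset G hTsub))
  constructor
  · intro S hS
    set S' : Finset V := S.image Subtype.val with hS'
    have hScard : S'.card = k - 1 := by
      rw [hS', Finset.card_image_of_injective _ Subtype.val_injective, hS]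
    have hvS' : v ∉ S' := by
      simp only [hS', Finset.mem_image]
      rintro ⟨⟨x, hx⟩, -, h⟩
      exact hx h
    set T : Finset V := insert v S' with hT
    have hTcard : T.card = k := by
      rw [hT, Finset.card_insert_of_notMem hvS', hScard]
      omega
    -- embedding G.induce Tᶜ ↪g double induce
    have femb : G.induce ((T : Set V)ᶜ) ↪g
        (G.induce ({v}ᶜ : Set V)).induce ((S : Set ({v}ᶜ : Set V))ᶜ) := by
      refine ⟨⟨fun x => ⟨⟨x.1, ?_⟩, ?_⟩, ?_⟩, Iff.rfl⟩
      · intro hxv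
        have hxv' : x.1 = v := hxv
        exact x.2 (Finset.mem_coe.mpr (show x.1 ∈ insert v S' from Finset.mem_insert.mpr (Or.inl hxv')))
      · intro hxS
        have hm : x.1 ∈ S' := Finset.mem_image_of_mem _ hxS
        exact x.2 (Finset.mem_coe.mpr (show x.1 ∈ insert v S' from Finset.mem_insert.mpr (Or.inr hm)))
      · intro a b hab
        have h1 := congrArg Subtype.val hab
        have h2 := congrArg Subtype.val h1
        exact Subtype.ext h2
    calc _root_.indepNum (G.induce ({v}ᶜ : Set V)) ≤ _root_.indepNum G := hle1
      _ ≤ _root_.indepNum (G.induce ((T : Set V)ᶜ)) := hstable T hTcard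
      _ ≤ _ := indepNum_le_of_emb femb
  · have : _root_.indepNum (G.induce ({v}ᶜ : Set V)) = _root_.indepNum G := le_antisymm hle1 hge1
    rw [this, halpha]
    congr 1
    omega
end

section
/- If G is a tight (k−1, ℓ−1)-stable graph (k > ℓ ≥ 1), then the disjoint union of G with a single isolated vertex is a tight (k,ℓ)-stable graph. -/
open SimpleGraph

/-- The disjoint union of `G` with a single isolated vertex, realized on `Option V`. -/
def addIsolatedVertex {V : Type*} (G : SimpleGraph V) : SimpleGraph (Option V) :=
  SimpleGraph.fromRel (fun a b => ∃ u v, a = some u ∧ b = some v ∧ G.Adj u v)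

lemma aiv_adj_some {V : Type*} (G : SimpleGraph V) {u v : V} :
    (addIsolatedVertex G).Adj (some u) (some v) ↔ G.Adj u v := by
  simp only [addIsolatedVertex, fromRel_adj, ne_eq, Option.some.injEq]
  constructor
  · rintro ⟨h1, h2⟩
    rcases h2 with ⟨a,b,ha,hb,h⟩ | ⟨a,b,ha,hb,h⟩
    · subst ha; subst hb; exact h
    · subst ha; subst hb; exact h.symm
  · intro h
    exact ⟨fun e => G.ne_of_adj h (by exact_mod_cast e), Or.inl ⟨u, v, rfl, rfl, h⟩⟩

lemma aiv_not_adj_none_left {V : Type*} (G : SimpleGraph V) (b : Option V) :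
    ¬ (addIsolatedVertex G).Adj none b := by
  simp [addIsolatedVertex, fromRel_adj]

lemma aiv_not_adj_none_right {V : Type*} (G : SimpleGraph V) (a : Option V) :
    ¬ (addIsolatedVertex G).Adj a none := fun h =>
  aiv_not_adj_none_left G a h.symm

lemma cliqueNum_le_of_map {W W' : Type*} [Fintype W] [Fintype W']
    (H : SimpleGraph W) (H' : SimpleGraph W') (f : W → W') (hf : Function.Injective f)
    (hadj : ∀ a b, H.Adj a b → H'.Adj (f a) (f b)) : H.cliqueNum ≤ H'.cliqueNum := by
  classical
  obtain ⟨s, hs⟩ := H.exists_isNClique_cliqueNum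
  have hclique : H'.IsClique (s.image f) := by
    intro a ha b hb hab
    simp only [Finset.coe_image, Set.mem_image, Finset.mem_coe] at ha hb
    obtain ⟨x, hx, rfl⟩ := ha
    obtain ⟨y, hy, rfl⟩ := hb
    exact hadj _ _ (hs.isClique hx hy (fun h => hab (congrArg f h)))
  calc H.cliqueNum = s.card := hs.card_eq.symm
    _ = (s.image f).card := (Finset.card_image_of_injective s hf).symm
    _ ≤ H'.cliqueNum := IsClique.card_le_cliqueNum (tc := hclique)

lemma aiv_indepNum {V : Type*} [Fintype V] (G : SimpleGraph V) :
    _root_.indepNum (addIsolatedVertex G) = _root_.indepNum G + 1 := by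
  classical
  apply le_antisymm
  · obtain ⟨s, hs⟩ := (addIsolatedVertex G)ᶜ.exists_isNClique_cliqueNum
    set t := s.preimage some (Option.some_injective V).injOn with ht
    have hclique : Gᶜ.IsClique t := by
      intro a ha b hb hab
      simp only [Finset.mem_coe, Finset.mem_preimage, ht] at ha hb
      have h2 := hs.isClique ha hb (fun h => hab (Option.some_injective V h))
      rw [compl_adj] at h2 ⊢
      exact ⟨hab, fun h => h2.2 ((aiv_adj_some G).2 h)⟩
    have hsub : s ⊆ insert none (t.image some) := by
      intro x hx
      rcases x with _ | y
      · exact Finset.mem_insert_self _ _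
      · exact Finset.mem_insert_of_mem
          (Finset.mem_image_of_mem _ (Finset.mem_preimage.2 hx))
    calc _root_.indepNum (addIsolatedVertex G) = s.card := hs.card_eq.symm
      _ ≤ (insert none (t.image some)).card := Finset.card_le_card hsub
      _ ≤ (t.image some).card + 1 := Finset.card_insert_le _ _
      _ ≤ t.card + 1 := by
          have : (t.image some).card ≤ t.card := Finset.card_image_le
          omega
      _ ≤ _root_.indepNum G + 1 := by
          have : t.card ≤ Gᶜ.cliqueNum := IsClique.card_le_cliqueNum (tc := hclique)
          exact Nat.add_le_add_right this 1
  · obtain ⟨s, hs⟩ := Gᶜ.exists_isNClique_cliqueNum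
    have hnone : (none : Option V) ∉ s.image some := by simp
    have hclique : (addIsolatedVertex G)ᶜ.IsClique (↑(insert none (s.image some)) : Set (Option V)) := by
      intro a ha b hb hab
      simp only [Finset.coe_insert, Set.mem_insert_iff, Finset.coe_image,
        Set.mem_image, Finset.mem_coe] at ha hb
      rw [compl_adj]
      refine ⟨hab, ?_⟩
      rcases ha with rfl | ⟨x, hx, rfl⟩
      · exact aiv_not_adj_none_left G b
      · rcases hb with rfl | ⟨y, hy, rfl⟩
        · exact aiv_not_adj_none_right G _
        · intro h
          have hG := (aiv_adj_some G).1 h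
          have hxy : x ≠ y := fun e => hab (by rw [e])
          exact ((compl_adj G x y).1 (hs.isClique hx hy hxy)).2 hG
    have hcard : (insert none (s.image some)).card = s.card + 1 := by
      rw [Finset.card_insert_of_notMem hnone,
        Finset.card_image_of_injective _ (Option.some_injective V)]
    calc _root_.indepNum G + 1 = (insert none (s.image some)).card := by
          rw [hcard, hs.card_eq]
          rfl
      _ ≤ _root_.indepNum (addIsolatedVertex G) := IsClique.card_le_cliqueNum (tc := hclique)

lemma indep_induce_le {V : Type*} [Fintype V] (G : SimpleGraph V)
    (T : Finset V) (S : Finset (Option V))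
    (f : ↥((T : Set V)ᶜ) → Option V) (hinj : Function.Injective f)
    (hmem : ∀ x, f x ∈ ((S : Set (Option V))ᶜ))
    (hadj : ∀ a b : ↥((T : Set V)ᶜ),
      (addIsolatedVertex G).Adj (f a) (f b) → G.Adj a.1 b.1) :
    _root_.indepNum (G.induce ((T : Set V)ᶜ)) ≤
      _root_.indepNum ((addIsolatedVertex G).induce ((S : Set (Option V))ᶜ)) := by
  classical
  haveI : Fintype ↥((T : Set V)ᶜ) := Fintype.ofFinite _
  haveI : Fintype ↥((S : Set (Option V))ᶜ) := Fintype.ofFinite _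
  apply cliqueNum_le_of_map _ _ (Set.codRestrict f _ hmem)
  · intro a b h
    exact hinj (Subtype.ext_iff.1 h)
  · intro a b hab
    rw [compl_adj] at hab ⊢
    refine ⟨fun e => hab.1 (hinj (Subtype.ext_iff.1 e)), fun h => ?_⟩
    have h' : (addIsolatedVertex G).Adj (f a) (f b) := by
      simpa using h
    exact hab.2 (by simpa using hadj a b h')

/-- If `G` is tight `(k−1, ℓ−1)`-stable (`k > ℓ ≥ 1`), then the disjoint union of `G` with an
isolated vertex is tight `(k, ℓ)`-stable. -/
theorem stmt13 {V : Type*} [Fintype V] (G : SimpleGraph V) (k ℓ : ℕ)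
    (hl : 1 ≤ ℓ) (hkl : ℓ < k)
    (hstable : ∀ S : Finset V, S.card = k - 1 →
      _root_.indepNum G ≤ _root_.indepNum (G.induce ((S : Set V)ᶜ)) + (ℓ - 1))
    (halpha : _root_.indepNum G = (Fintype.card V - (k - 1) + 1) / 2 + (ℓ - 1)) :
    (∀ S : Finset (Option V), S.card = k →
      _root_.indepNum (addIsolatedVertex G) ≤
        _root_.indepNum ((addIsolatedVertex G).induce ((S : Set (Option V))ᶜ)) + ℓ) ∧
    _root_.indepNum (addIsolatedVertex G) = ((Fintype.card V + 1) - k + 1) / 2 + ℓ := by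
  classical
  have h1 := aiv_indepNum G
  constructor
  · intro S hS
    by_cases hnone : (none : Option V) ∈ S
    · set T := S.preimage some (Option.some_injective V).injOn with hT
      have himg : T.image some = S.erase none := by
        ext x
        rcases x with _ | y
        · simp
        · simp [hT, Finset.mem_preimage]
      have hTcard : T.card = k - 1 := by
        have hc := congrArg Finset.card himg
        rw [Finset.card_image_of_injective _ (Option.some_injective V),
          Finset.card_erase_of_mem hnone, hS] at hc
        exact hc
      have h2 := hstable T hTcard
      have h3 := indep_induce_le G T S (fun x => some x.1)
        (fun x y h => Subtype.ext (Option.some_injective V h))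
        (fun x => by
          have := x.2
          simp only [Set.mem_compl_iff, Finset.mem_coe, hT, Finset.mem_preimage] at this ⊢
          exact this)
        (fun a b h => (aiv_adj_some G).1 h)
      omega
    · set T0 := S.preimage some (Option.some_injective V).injOn with hT0
      have himg : T0.image some = S := by
        ext x
        rcases x with _ | y
        · simp [hnone]
        · simp [hT0, Finset.mem_preimage]
      have hT0card : T0.card = k := by
        have hc := congrArg Finset.card himg
        rw [Finset.card_image_of_injective _ (Option.some_injective V), hS] at hc
        exact hc
      have hne : T0.Nonempty := by
        rw [← Finset.card_pos, hT0card]; omega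
      obtain ⟨v, hv⟩ := hne
      set T := T0.erase v with hTdef
      have hTcard : T.card = k - 1 := by
        rw [hTdef, Finset.card_erase_of_mem hv, hT0card]
      have h2 := hstable T hTcard
      have h3 := indep_induce_le G T S
        (fun x => if x.1 = v then none else some x.1)
        (fun x y h => by
          dsimp only at h
          split_ifs at h with hx hy
          · exact Subtype.ext (hx.trans hy.symm)
          · exact Subtype.ext (Option.some_injective V h))
        (fun x => by
          have hx2 := x.2
          simp only [Set.mem_compl_iff, Finset.mem_coe, hTdef, Finset.mem_erase,
            not_and] at hx2
          by_cases hx : x.1 = v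
          · simp [hx, hnone]
          · have : x.1 ∉ T0 := hx2 hx
            simp only [hT0, Finset.mem_preimage] at this
            simp [hx, this])
        (fun a b h => by
          split_ifs at h with hx hy hy
          · exact absurd h ((addIsolatedVertex G).irrefl)
          · exact absurd h (aiv_not_adj_none_left G _)
          · exact absurd h (aiv_not_adj_none_right G _)
          · exact (aiv_adj_some G).1 h)
      omega
  · rw [h1, halpha]
    omega
end
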